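/- arXiv:1903.01157 — 3 statements merged into one kernel-verified Lean document; each statement's English description precedes it below -/
import Mathlib

section
/- For every nonnegative integer M, the triple sum over nonnegative integers m, n1, n2 of C(3(M-m-n1-n2), m) * C(M-m-n1-n2 + floor(n1/2), floor(n1/2)) * C(M-m-n1-n2 + floor(n2/2), floor(n2/2)) equals 3^M, where C(a,b) denotes the binomial coefficient and terms with M-m-n1-n2 < 0 (or any binomial with negative upper index) are zero. -/
/-!
With `c_L(n) = C(L + ⌊n/2⌋, ⌊n/2⌋)`, the series `H_L = ∑ c_L(n) Xⁿ` equals `1 / ((1 - X)(1 - X²)^L)`,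
and the sum in question is the coefficient of `X^M` in `∑_L X^L (1 + X)^{3L} H_L²`
(`L = M - m - n1 - n2`). That summand is `r^L / (1 - X)²` with `r = X(1 + X) / (1 - X)²`, and
`(1 - X)² (1 - r) = 1 - 3X`, so the geometric series sums to `1 / (1 - 3X)`.
-/

open Finset

theorem Finset.sum_range_ite_add_eq {M : Type*} [AddCommMonoid M] (g : ℕ → M) {k n N : ℕ}
    (hn : n ≤ N) :
    ∑ i ∈ range (N + 1), (if k + i = n then g i else 0) = if k ≤ n then g (n - k) else 0 := by
  split_ifs with hk
  · rw [sum_eq_single (n - k) (fun i _ hi => if_neg (by omega)) (fun h => by simp only [mem_range] at h; omega),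
      if_pos (by omega)]
  · exact sum_eq_zero fun i _ => if_neg (by omega)

namespace PowerSeries

variable {R : Type*} [CommRing R]

theorem coeff_mul_eq_sum_range_ite (f g : R⟦X⟧) {n N : ℕ} (hn : n ≤ N) :
    coeff n (f * g) = ∑ i ∈ range (N + 1), ∑ j ∈ range (N + 1),
      if i + j = n then coeff i f * coeff j g else 0 := by
  simp_rw [sum_range_ite_add_eq _ hn]
  rw [coeff_mul, Nat.sum_antidiagonal_eq_sum_range_succ_mk, sum_ite, sum_const_zero, add_zero]
  congr 1
  ext i
  simp only [mem_range, mem_filter]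
  omega

theorem coeff_mul_mul_eq_sum_range_ite (f g h : R⟦X⟧) {n N : ℕ} (hn : n ≤ N) :
    coeff n (f * (g * h)) = ∑ i ∈ range (N + 1), ∑ j ∈ range (N + 1), ∑ k ∈ range (N + 1),
      if i + j + k = n then coeff i f * coeff j g * coeff k h else 0 := by
  rw [coeff_mul_eq_sum_range_ite _ _ hn]
  refine sum_congr rfl fun i _ => ?_
  rw [sum_range_ite_add_eq (fun a => coeff i f * coeff a (g * h)) hn]
  split_ifs with hi
  · rw [coeff_mul_eq_sum_range_ite _ _ ((n.sub_le i).trans hn), mul_sum]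
    refine sum_congr rfl fun j _ => ?_
    rw [mul_sum]
    refine sum_congr rfl fun k _ => ?_
    rw [mul_ite, mul_zero, ← mul_assoc]
    exact if_congr (by omega) rfl rfl
  · exact (sum_eq_zero fun j _ => sum_eq_zero fun k _ => if_neg (by omega)).symm

theorem coeff_one_add_X_pow (k n : ℕ) : coeff n ((1 + X : R⟦X⟧) ^ k) = k.choose n := by
  rw [← Polynomial.coeff_one_add_X_pow R, ← Polynomial.coeff_coe]
  push_cast
  rfl

theorem one_sub_C_mul_X_mul_mk_pow (a : R) : (1 - C a * X) * mk (a ^ ·) = 1 := by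
  have h : rescale a (mk 1) = mk (a ^ ·) := by ext n; simp
  simpa [h, rescale_X, mul_comm] using congrArg (rescale a) (mk_one_mul_one_sub_eq_one R)

end PowerSeries

open PowerSeries

noncomputable section

variable (R : Type*) [CommRing R]

def halfChooseSeries (L : ℕ) : R⟦X⟧ := PowerSeries.mk fun n => ((L + n / 2).choose (n / 2) : R)

theorem halfChooseSeries_zero_mul_one_sub_X : halfChooseSeries R 0 * (1 - X) = 1 := by
  convert mk_one_mul_one_sub_eq_one R
  ext n
  simp [halfChooseSeries]

-- Pascal's rule `C(L + 1 + k, k) = C(L + k, k) + C(L + k, k - 1)` with `k = ⌊n/2⌋`.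
theorem halfChooseSeries_succ_mul_one_sub_X_sq (L : ℕ) :
    halfChooseSeries R (L + 1) * (1 - X ^ 2) = halfChooseSeries R L := by
  ext n
  rw [mul_sub, mul_one, map_sub, coeff_mul_X_pow']
  split_ifs with hn
  · obtain ⟨k, rfl⟩ := Nat.exists_eq_add_of_le' hn
    simp only [halfChooseSeries, coeff_mk, Nat.add_sub_cancel, Nat.add_div_right k two_pos]
    rw [show L + 1 + (k / 2 + 1) = L + 1 + k / 2 + 1 by ring, Nat.choose_succ_succ, Nat.cast_add,
      add_sub_cancel_left, add_right_comm, add_assoc]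
  · interval_cases n <;> simp [halfChooseSeries]

variable {R}

def schurSummand (L : ℕ) : R⟦X⟧ :=
  X ^ L * ((1 + X) ^ (3 * L) * (halfChooseSeries R L * halfChooseSeries R L))

theorem schurSummand_mul_one_sub_three_mul_X (L : ℕ) :
    schurSummand L * (1 - 3 * X) =
      (1 - X) ^ 2 * (schurSummand L - schurSummand (L + 1) : R⟦X⟧) := by
  rw [schurSummand, schurSummand, ← halfChooseSeries_succ_mul_one_sub_X_sq]
  ring

theorem sum_range_schurSummand_mul_one_sub_three_mul_X (N : ℕ) :
    (∑ L ∈ range N, schurSummand L) * (1 - 3 * X) =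
      1 - (1 - X) ^ 2 * (schurSummand N : R⟦X⟧) := by
  rw [sum_mul, sum_congr rfl fun L _ => schurSummand_mul_one_sub_three_mul_X L, ← mul_sum,
    sum_range_sub', mul_sub, schurSummand]
  linear_combination (halfChooseSeries R 0 * (1 - X) + 1) * halfChooseSeries_zero_mul_one_sub_X R

theorem coeff_sum_range_schurSummand_of_lt {M N : ℕ} (h : M < N) :
    coeff M (∑ L ∈ range N, schurSummand L : R⟦X⟧) = 3 ^ M := by
  set E : R⟦X⟧ := PowerSeries.mk (3 ^ ·)
  have hsum : ∑ L ∈ range N, schurSummand L =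
      E - X ^ N * ((1 - X) ^ 2 * ((1 + X) ^ (3 * N) *
        (halfChooseSeries R N * halfChooseSeries R N)) * E) :=
    calc ∑ L ∈ range N, schurSummand L
        = (∑ L ∈ range N, schurSummand L) * ((1 - C 3 * X) * E) := by
          rw [one_sub_C_mul_X_mul_mk_pow, mul_one]
      _ = (1 - (1 - X) ^ 2 * schurSummand N) * E := by
          rw [map_ofNat, ← mul_assoc, sum_range_schurSummand_mul_one_sub_three_mul_X]
      _ = _ := by rw [schurSummand]; ring
  rw [hsum, map_sub, coeff_mk, coeff_X_pow_mul', if_neg (by omega), sub_zero]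

theorem coeff_sum_range_schurSummand (M : ℕ) :
    coeff M (∑ L ∈ range (M + 1), schurSummand L : R⟦X⟧) =
      ∑ m ∈ range (M + 1), ∑ n1 ∈ range (M + 1), ∑ n2 ∈ range (M + 1),
        if m + n1 + n2 ≤ M then
          ((3 * (M - m - n1 - n2)).choose m : R) *
            ((M - m - n1 - n2 + n1 / 2).choose (n1 / 2) : R) *
            ((M - m - n1 - n2 + n2 / 2).choose (n2 / 2) : R)
        else 0 := by
  have hL : ∀ L ∈ range (M + 1), coeff M (schurSummand L : R⟦X⟧) =
      ∑ m ∈ range (M + 1), ∑ n1 ∈ range (M + 1), ∑ n2 ∈ range (M + 1),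
        if m + n1 + n2 + L = M then
          ((3 * L).choose m : R) * ((L + n1 / 2).choose (n1 / 2) : R) *
            ((L + n2 / 2).choose (n2 / 2) : R)
        else 0 := by
    intro L hL
    rw [mem_range, Nat.lt_succ_iff] at hL
    rw [schurSummand, coeff_X_pow_mul', if_pos hL,
      coeff_mul_mul_eq_sum_range_ite _ _ _ (M.sub_le L)]
    simp only [coeff_one_add_X_pow, halfChooseSeries, coeff_mk, eq_tsub_iff_add_eq_of_le hL]
  rw [map_sum, sum_congr rfl hL, sum_comm]
  refine sum_congr rfl fun m _ => ?_
  rw [sum_comm]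
  refine sum_congr rfl fun n1 _ => ?_
  rw [sum_comm]
  refine sum_congr rfl fun n2 _ => ?_
  rw [sum_range_ite_add_eq _ le_rfl]
  simp only [Nat.sub_sub, add_assoc]

end

theorem schur_q_eq_one_identity (M : ℕ) :
    ∑ m ∈ range (M + 1), ∑ n1 ∈ range (M + 1), ∑ n2 ∈ range (M + 1),
      (if m + n1 + n2 ≤ M then
        Nat.choose (3 * (M - m - n1 - n2)) m *
          Nat.choose (M - m - n1 - n2 + n1 / 2) (n1 / 2) *
          Nat.choose (M - m - n1 - n2 + n2 / 2) (n2 / 2)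
      else 0) = 3 ^ M := by
  have h := coeff_sum_range_schurSummand (R := ℤ) M
  rw [coeff_sum_range_schurSummand_of_lt M.lt_succ_self] at h
  exact_mod_cast h.symm
end

section
/- Define the q-trinomial coefficient ⟨m; b; q | a⟩₂ := Σ_{k≥0} q^{k(k+b)} · [m choose k]_q · [m-k choose k+a]_q (Gaussian binomials in q), and define R_N(q) := Σ_{j=-N}^{N} q^{j(3j-1)/2} · ⟨N; j; q³ | j⟩₂. Then for all N ≥ 2, R_N(q) = (1 + q^{3N-2} + q^{3N-1})·R_{N-1}(q) + q^{3N-3}·(1 - q^{3N-3})·R_{N-2}(q) as polynomials in q. -/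
open Finset Polynomial

/-- The Gaussian (q-)binomial coefficient `[n choose k]_q` as a polynomial in `q`,
defined by the q-Pascal recurrence.  It vanishes when `k > n`. -/
noncomputable def qbinom : ℕ → ℕ → Polynomial ℤ
  | _, 0 => 1
  | 0, _ + 1 => 0
  | n + 1, k + 1 => qbinom n k + Polynomial.X ^ (k + 1) * qbinom n (k + 1)

/-- The round q-trinomial coefficient `⟨m; b; q | a⟩₂ = Σ_k q^{k(k+b)} [m choose k]_q
[m-k choose k+a]_q` (terms with `k + a < 0` vanish). -/
noncomputable def qtrinom (m : ℕ) (b a : ℤ) : Polynomial ℤ :=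
  ∑ k ∈ range (m + 1),
    if 0 ≤ (k : ℤ) + a ∧ 0 ≤ (k : ℤ) * ((k : ℤ) + b) then
      Polynomial.X ^ (((k : ℤ) * ((k : ℤ) + b)).toNat) * qbinom m k *
        qbinom (m - k) (((k : ℤ) + a).toNat)
    else 0

/-- `R_N(q) = Σ_{j=-N}^N q^{j(3j-1)/2} ⟨N; j; q³ | j⟩₂`. -/
noncomputable def schurR (N : ℕ) : Polynomial ℤ :=
  ∑ j ∈ Finset.Icc (-(N : ℤ)) (N : ℤ),
    Polynomial.X ^ ((j * (3 * j - 1) / 2).toNat) * (qtrinom N j j).comp (Polynomial.X ^ 3)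

/-!
Everything is proved at a unit `q` of an arbitrary commutative ring, where the exponents
`k(k+b)` of the trinomial coefficients may be negative. The two Pascal rules for Gaussian
binomials give two recurrences in `m` for `⟨m; b; q | a⟩₂`. Summed against `q^{j(3j-1)/2}`
they express `q R_{N+1}` in two ways through the companion sum
`Z_N = Σ_j q^{j(3j-1)/2} ⟨N; j; q³ | j-1⟩₂`:
`q R_{N+1} = (1 + q) Z_N + q^{3N+3} R_N` and `q R_{N+1} = Z_{N+1} + (1 - q^{3N+3}) q Z_N`.
Eliminating `Z` gives the recurrence; the polynomial identity follows by evaluating at `T`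
in `ℤ[T;T⁻¹]`, into which `ℤ[X]` embeds.
-/

lemma Finset.sum_Icc_add_one {M : Type*} [AddCommMonoid M] (f : ℤ → M) (a b : ℤ) :
    ∑ j ∈ Icc a b, f (j + 1) = ∑ j ∈ Icc (a + 1) (b + 1), f j := by
  rw [← map_add_right_Icc, sum_map]
  rfl

lemma Finset.sum_Icc_eq_sum_Icc_of_support {M : Type*} [AddCommMonoid M] {f : ℤ → M}
    {lo hi : ℤ} (hf : ∀ j ∉ Icc lo hi, f j = 0) {a b a' b' : ℤ} (ha : a ≤ lo) (hb : hi ≤ b)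
    (ha' : a' ≤ lo) (hb' : hi ≤ b') :
    ∑ j ∈ Icc a b, f j = ∑ j ∈ Icc a' b', f j := by
  have key : ∀ {u v : ℤ}, u ≤ lo → hi ≤ v → ∑ j ∈ Icc u v, f j = ∑ j ∈ Icc lo hi, f j :=
    fun hu hv => (sum_subset (Icc_subset_Icc hu hv) fun j _ hj => hf j hj).symm
  rw [key ha hb, key ha' hb']

lemma natCast_pentagonal_add_one (j : ℤ) :
    (pentagonal (j + 1) : ℤ) = pentagonal j + (3 * j + 1) := by
  linarith [two_mul_natCast_pentagonal j, two_mul_natCast_pentagonal (j + 1)]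

lemma qbinom_zero_right (n : ℕ) : qbinom n 0 = 1 := by cases n <;> rfl

section

variable {R : Type*} [CommRing R] (q : Rˣ)

lemma units_val_zpow_mul {a b c : ℤ} (h : a + b = c) :
    (↑(q ^ a) : R) * ↑(q ^ b) = ↑(q ^ c) := by
  rw [← Units.val_mul, ← zpow_add, h]

lemma units_val_zpow_mul_eq {a b c d : ℤ} (h : a + b = c + d) :
    (↑(q ^ a) : R) * ↑(q ^ b) = ↑(q ^ c) * ↑(q ^ d) := by
  rw [← Units.val_mul, ← Units.val_mul, ← zpow_add, ← zpow_add, h]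

lemma units_val_zpow_of_nonneg {e : ℤ} (he : 0 ≤ e) : (↑(q ^ e) : R) = ↑q ^ e.toNat := by
  obtain ⟨n, rfl⟩ := Int.eq_ofNat_of_zero_le he
  simp

/-- `[n choose s]_q` at a unit `q`, for an integer lower index `s`; it vanishes for `s < 0`. -/
noncomputable def qbinomAt (n : ℕ) (s : ℤ) : R :=
  if 0 ≤ s then (qbinom n s.toNat).eval₂ (Int.castRingHom R) q else 0

lemma qbinomAt_natCast (n k : ℕ) : qbinomAt q n k = (qbinom n k).eval₂ (Int.castRingHom R) q := by
  simp [qbinomAt]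

lemma qbinomAt_of_neg {n : ℕ} {s : ℤ} (hs : s < 0) : qbinomAt q n s = 0 :=
  if_neg (by omega)

lemma qbinomAt_zero_left (s : ℤ) : qbinomAt q 0 s = if s = 0 then 1 else 0 := by
  rcases lt_trichotomy s 0 with hs | rfl | hs
  · rw [qbinomAt_of_neg q hs, if_neg hs.ne]
  · simp [qbinomAt, qbinom_zero_right]
  · obtain ⟨k, rfl⟩ : ∃ k : ℕ, s = (k + 1 : ℕ) := ⟨s.toNat - 1, by omega⟩
    rw [qbinomAt_natCast, if_neg (by omega)]
    simp [qbinom]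

lemma qbinomAt_succ (n : ℕ) (s : ℤ) :
    qbinomAt q (n + 1) s = qbinomAt q n (s - 1) + ↑(q ^ s) * qbinomAt q n s := by
  rcases lt_trichotomy s 0 with hs | rfl | hs
  · simp [qbinomAt_of_neg q hs, qbinomAt_of_neg q (show s - 1 < 0 by omega)]
  · simp [qbinomAt, qbinom_zero_right]
  · obtain ⟨k, rfl⟩ : ∃ k : ℕ, s = (k + 1 : ℕ) := ⟨s.toNat - 1, by omega⟩
    rw [show ((k + 1 : ℕ) : ℤ) - 1 = k by push_cast; ring, qbinomAt_natCast,
      qbinomAt_natCast, qbinomAt_natCast, qbinom, zpow_natCast]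
    simp

lemma qbinomAt_of_lt {n : ℕ} {s : ℤ} (h : n < s) : qbinomAt q n s = 0 := by
  induction n generalizing s with
  | zero => rw [qbinomAt_zero_left, if_neg (by omega)]
  | succ n ih => rw [qbinomAt_succ, ih (by omega), ih (by omega), mul_zero, add_zero]

lemma qbinomAt_succ' (n : ℕ) (s : ℤ) :
    qbinomAt q (n + 1) s = qbinomAt q n s + ↑(q ^ ((n : ℤ) + 1 - s)) * qbinomAt q n (s - 1) := by
  induction n generalizing s with
  | zero =>
    rw [qbinomAt_succ]
    simp only [qbinomAt_zero_left]
    by_cases h0 : s = 0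
    · simp [h0]
    · by_cases h1 : s = 1 <;> simp [h0, h1, sub_eq_zero]
  | succ n ih =>
    conv_lhs => rw [qbinomAt_succ, ih, ih]
    conv_rhs => rw [qbinomAt_succ q n s, qbinomAt_succ q n (s - 1)]
    have h := units_val_zpow_mul_eq q (a := s) (b := n + 1 - s) (c := (n + 1 : ℕ) + 1 - s)
      (d := s - 1) (by push_cast; ring)
    rw [show (n : ℤ) + 1 - (s - 1) = ((n + 1 : ℕ) : ℤ) + 1 - s by push_cast; ring]
    linear_combination qbinomAt q n (s - 1) * h

lemma one_sub_mul_qbinomAt (n : ℕ) (s : ℤ) :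
    (1 - ↑(q ^ s)) * qbinomAt q n s = (1 - ↑(q ^ (n : ℤ))) * qbinomAt q (n - 1) (s - 1) := by
  cases n with
  | zero =>
    rw [qbinomAt_zero_left]
    by_cases hs : s = 0 <;> simp [hs]
  | succ n =>
    have h := units_val_zpow_mul q (a := s) (b := n + 1 - s) (c := (n + 1 : ℕ)) (by push_cast; ring)
    rw [Nat.add_sub_cancel]
    linear_combination qbinomAt_succ q n s - ↑(q ^ s) * qbinomAt_succ' q n s
      - qbinomAt q n (s - 1) * h

lemma one_sub_mul_qbinomAt_succ (n : ℕ) (s : ℤ) :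
    (1 - ↑(q ^ ((n : ℤ) + 1 - s))) * qbinomAt q (n + 1) s
      = (1 - ↑(q ^ ((n : ℤ) + 1))) * qbinomAt q n s := by
  have h := units_val_zpow_mul q (a := n + 1 - s) (b := s) (c := n + 1) (by ring)
  linear_combination qbinomAt_succ' q n s - ↑(q ^ ((n : ℤ) + 1 - s)) * qbinomAt_succ q n s
    - qbinomAt q n s * h

/-- `⟨m; b; q | a⟩₂` at a unit `q`; the exponent `k(k+b)` may be negative. -/
noncomputable def qtrinomAt (m : ℕ) (b a : ℤ) : R :=
  ∑ k ∈ range (m + 1),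
    ↑(q ^ ((k : ℤ) * (k + b))) * qbinomAt q m k * qbinomAt q (m - k) (k + a)

lemma qtrinomAt_eq_zero {m : ℕ} {a : ℤ} (ha : a ∉ Icc (-(m : ℤ)) m) (b : ℤ) :
    qtrinomAt q m b a = 0 := by
  refine sum_eq_zero fun k hk => ?_
  have hk : k ≤ m := Nat.lt_succ_iff.mp (mem_range.mp hk)
  rcases not_and_or.mp (mem_Icc.not.mp ha) with ha | ha
  · rw [qbinomAt_of_neg q (n := m - k) (by omega), mul_zero]
  · rw [qbinomAt_of_lt q (n := m - k) (by push_cast [Nat.cast_sub hk]; omega), mul_zero]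

lemma qtrinomAt_eq_sum_range_add_two (m : ℕ) (b a : ℤ) :
    qtrinomAt q m b a = ∑ k ∈ range (m + 2),
      ↑(q ^ ((k : ℤ) * (k + b))) * qbinomAt q m k * qbinomAt q (m - k) (k + a) := by
  rw [sum_range_succ, qbinomAt_of_lt q (by push_cast; omega), mul_zero, zero_mul, add_zero,
    qtrinomAt]

theorem qtrinomAt_succ (m : ℕ) (b a : ℤ) :
    qtrinomAt q (m + 1) b a = qtrinomAt q m b (a - 1) + ↑(q ^ a) * qtrinomAt q m (b + 1) a
      + ↑(q ^ ((m : ℤ) + 1 + b)) * qtrinomAt q m (b + 1) (a + 1) := by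
  have lower : ∑ k ∈ range (m + 2), ↑(q ^ ((k : ℤ) * (k + b))) * qbinomAt q m k
      * qbinomAt q (m + 1 - k) (k + a)
      = qtrinomAt q m b (a - 1) + ↑(q ^ a) * qtrinomAt q m (b + 1) a := by
    rw [sum_range_succ, qbinomAt_of_lt q (by push_cast; omega), mul_zero, zero_mul, add_zero]
    simp only [qtrinomAt, mul_sum, ← sum_add_distrib]
    refine sum_congr rfl fun k hk => ?_
    have hk : k ≤ m := Nat.lt_succ_iff.mp (mem_range.mp hk)
    rw [show m + 1 - k = m - k + 1 by omega, qbinomAt_succ,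
      show (k : ℤ) + a - 1 = k + (a - 1) by ring]
    have h := units_val_zpow_mul_eq q (a := a) (b := k * (k + (b + 1))) (c := k * (k + b))
      (d := k + a) (by ring)
    linear_combination -(qbinomAt q m k * qbinomAt q (m - k) (k + a)) * h
  have upper : ∑ k ∈ range (m + 2), ↑(q ^ ((k : ℤ) * (k + b)))
      * (↑(q ^ ((m : ℤ) + 1 - k)) * qbinomAt q m (k - 1)) * qbinomAt q (m + 1 - k) (k + a)
      = ↑(q ^ ((m : ℤ) + 1 + b)) * qtrinomAt q m (b + 1) (a + 1) := by
    rw [sum_range_succ', Nat.cast_zero, zero_sub, qbinomAt_of_neg q (n := m) neg_one_lt_zero]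
    simp only [mul_zero, zero_mul, add_zero]
    rw [qtrinomAt, mul_sum]
    refine sum_congr rfl fun k _ => ?_
    rw [show m + 1 - (k + 1) = m - k by omega]
    push_cast
    rw [add_sub_cancel_right, show (k : ℤ) + 1 + a = k + (a + 1) by ring]
    have h := units_val_zpow_mul_eq q (a := (k + 1) * (k + 1 + b)) (b := m + 1 - (k + 1))
      (c := m + 1 + b) (d := k * (k + (b + 1))) (by ring)
    linear_combination qbinomAt q m k * qbinomAt q (m - k) (k + (a + 1)) * h
  rw [qtrinomAt, ← lower, ← upper, ← sum_add_distrib]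
  refine sum_congr rfl fun k _ => ?_
  rw [qbinomAt_succ']
  ring

theorem qtrinomAt_succ' (m : ℕ) (b a : ℤ) :
    qtrinomAt q (m + 1) b a = ↑(q ^ a) * qtrinomAt q (m + 1) (b + 1) a
      + (1 - ↑(q ^ ((m : ℤ) + 1))) * qtrinomAt q m b (a - 1) := by
  rw [qtrinomAt_eq_sum_range_add_two q m, qtrinomAt, qtrinomAt, mul_sum, mul_sum,
    ← sum_add_distrib]
  refine sum_congr rfl fun k hk => ?_
  have hk : k ≤ m + 1 := Nat.lt_succ_iff.mp (mem_range.mp hk)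
  have hA := one_sub_mul_qbinomAt q (m + 1 - k) (k + a)
  rw [show m + 1 - k - 1 = m - k by omega, Nat.cast_sub hk, Nat.cast_add, Nat.cast_one,
    show (k : ℤ) + a - 1 = k + (a - 1) by ring] at hA
  have hB := one_sub_mul_qbinomAt_succ q m k
  have h := units_val_zpow_mul_eq q (a := a) (b := k * (k + (b + 1))) (c := k * (k + b))
    (d := k + a) (by ring)
  linear_combination ↑(q ^ ((k : ℤ) * (k + b))) * qbinomAt q (m + 1) k * hA
    + ↑(q ^ ((k : ℤ) * (k + b))) * qbinomAt q (m - k) (k + (a - 1)) * hB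
    - qbinomAt q (m + 1) k * qbinomAt q (m + 1 - k) (k + a) * h

/-- `R_N(q)`. -/
noncomputable def schurSum (N : ℕ) : R :=
  ∑ j ∈ Icc (-(N : ℤ)) N, ↑q ^ pentagonal j * qtrinomAt (q ^ 3) N j j

noncomputable def schurCompanion (N : ℕ) : R :=
  ∑ j ∈ Icc (-(N : ℤ) - 1) (N + 1), ↑q ^ pentagonal j * qtrinomAt (q ^ 3) N j (j - 1)

lemma units_val_pow_eq_val_zpow (n : ℕ) : (↑q : R) ^ n = ↑(q ^ (n : ℤ)) := by
  rw [zpow_natCast, Units.val_pow_eq_pow_val]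

lemma units_val_mul_pow_pentagonal (j : ℤ) :
    (↑q : R) * ↑q ^ pentagonal j * ↑((q ^ 3) ^ j) = ↑q ^ pentagonal (j + 1) := by
  have h : q * q ^ (pentagonal j : ℤ) * (q ^ 3) ^ j = q ^ (pentagonal (j + 1) : ℤ) := by
    rw [natCast_pentagonal_add_one]
    group
  rw [units_val_pow_eq_val_zpow, units_val_pow_eq_val_zpow, ← h, Units.val_mul, Units.val_mul]

lemma units_val_pow_three_zpow_natCast_add_one (m : ℕ) :
    (↑((q ^ 3) ^ ((m : ℤ) + 1)) : R) = ↑q ^ (3 * m + 3) := by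
  rw [units_val_pow_eq_val_zpow]
  push_cast
  group

theorem mul_schurSum_succ (m : ℕ) :
    (↑q : R) * schurSum q (m + 1)
      = ↑q * schurCompanion q m + schurCompanion q m + ↑q ^ (3 * m + 3) * schurSum q m := by
  have term (j : ℤ) : (↑q : R) * (↑q ^ pentagonal j * qtrinomAt (q ^ 3) (m + 1) j j)
      = ↑q * (↑q ^ pentagonal j * qtrinomAt (q ^ 3) m j (j - 1))
        + ↑q ^ pentagonal (j + 1) * qtrinomAt (q ^ 3) m (j + 1) (j + 1 - 1)
        + ↑q ^ (3 * m + 3) * (↑q ^ pentagonal (j + 1) * qtrinomAt (q ^ 3) m (j + 1) (j + 1)) := by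
    rw [qtrinomAt_succ, add_sub_cancel_right, zpow_add, Units.val_mul,
      units_val_pow_three_zpow_natCast_add_one, ← units_val_mul_pow_pentagonal]
    ring
  have companion : ∑ j ∈ Icc (-(m : ℤ) - 1) (m + 1),
      (↑q : R) ^ pentagonal (j + 1) * qtrinomAt (q ^ 3) m (j + 1) (j + 1 - 1)
        = schurCompanion q m := by
    rw [sum_Icc_add_one (fun j => (↑q : R) ^ pentagonal j * qtrinomAt (q ^ 3) m j (j - 1))]
    refine sum_Icc_eq_sum_Icc_of_support (lo := 1 - m) (hi := m + 1) (fun j hj => ?_)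
      (by omega) (by omega) (by omega) le_rfl
    rw [qtrinomAt_eq_zero _ (by simp only [mem_Icc] at hj ⊢; omega), mul_zero]
  have schur : ∑ j ∈ Icc (-(m : ℤ) - 1) (m + 1),
      (↑q : R) ^ pentagonal (j + 1) * qtrinomAt (q ^ 3) m (j + 1) (j + 1) = schurSum q m := by
    rw [sum_Icc_add_one (fun j => (↑q : R) ^ pentagonal j * qtrinomAt (q ^ 3) m j j)]
    refine sum_Icc_eq_sum_Icc_of_support (lo := -m) (hi := m) (fun j hj => ?_)
      (by omega) (by omega) le_rfl le_rfl
    rw [qtrinomAt_eq_zero _ (by simp only [mem_Icc] at hj ⊢; omega), mul_zero]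
  rw [schurSum, show -((m + 1 : ℕ) : ℤ) = -m - 1 by push_cast; ring, Nat.cast_succ, mul_sum,
    sum_congr rfl fun j _ => term j, sum_add_distrib, sum_add_distrib, ← mul_sum, ← mul_sum,
    companion, schur]
  rfl

theorem mul_schurSum_succ' (m : ℕ) :
    (↑q : R) * schurSum q (m + 1)
      = schurCompanion q (m + 1) + (1 - ↑q ^ (3 * m + 3)) * (↑q * schurCompanion q m) := by
  have term (j : ℤ) : (↑q : R) * (↑q ^ pentagonal j * qtrinomAt (q ^ 3) (m + 1) j j)
      = ↑q ^ pentagonal (j + 1) * qtrinomAt (q ^ 3) (m + 1) (j + 1) (j + 1 - 1)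
        + (1 - ↑q ^ (3 * m + 3)) * (↑q * (↑q ^ pentagonal j * qtrinomAt (q ^ 3) m j (j - 1))) := by
    rw [qtrinomAt_succ', add_sub_cancel_right, units_val_pow_three_zpow_natCast_add_one,
      ← units_val_mul_pow_pentagonal]
    ring
  have companion : ∑ j ∈ Icc (-(m : ℤ) - 1) (m + 1), (↑q : R) ^ pentagonal (j + 1)
      * qtrinomAt (q ^ 3) (m + 1) (j + 1) (j + 1 - 1) = schurCompanion q (m + 1) := by
    rw [sum_Icc_add_one (fun j => (↑q : R) ^ pentagonal j * qtrinomAt (q ^ 3) (m + 1) j (j - 1)),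
      schurCompanion]
    refine sum_Icc_eq_sum_Icc_of_support (lo := -m) (hi := m + 2) (fun j hj => ?_)
      (by omega) (by omega) (by push_cast; omega) (by push_cast; omega)
    rw [qtrinomAt_eq_zero _ (by push_cast; simp only [mem_Icc] at hj ⊢; omega), mul_zero]
  rw [schurSum, show -((m + 1 : ℕ) : ℤ) = -m - 1 by push_cast; ring, Nat.cast_succ, mul_sum,
    sum_congr rfl fun j _ => term j, sum_add_distrib, companion, ← mul_sum, ← mul_sum]
  rfl

theorem schurSum_recurrence (n : ℕ) :
    schurSum q (n + 2) = (1 + ↑q ^ (3 * n + 4) + ↑q ^ (3 * n + 5)) * schurSum q (n + 1)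
      + ↑q ^ (3 * n + 3) * (1 - ↑q ^ (3 * n + 3)) * schurSum q n := by
  refine q.isUnit.mul_left_cancel ?_
  linear_combination mul_schurSum_succ q (n + 1) - (↑q + 1) * mul_schurSum_succ' q n
    + ↑q * (1 - ↑q ^ (3 * n + 3)) * mul_schurSum_succ q n

lemma eval₂_qtrinom {m : ℕ} {b a : ℤ} (hab : a ≤ b) :
    (qtrinom m b a).eval₂ (Int.castRingHom R) q = qtrinomAt q m b a := by
  rw [qtrinom, qtrinomAt, eval₂_finsetSum]
  refine sum_congr rfl fun k _ => ?_
  by_cases hk : 0 ≤ (k : ℤ) + a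
  · have hexp : 0 ≤ (k : ℤ) * (k + b) := mul_nonneg (Int.natCast_nonneg k) (by omega)
    rw [if_pos ⟨hk, hexp⟩, eval₂_mul, eval₂_mul, eval₂_X_pow, qbinomAt_natCast, qbinomAt,
      if_pos hk, units_val_zpow_of_nonneg q hexp]
  · rw [if_neg fun h => hk h.1, qbinomAt_of_neg q (n := m - k) (by omega), mul_zero, eval₂_zero]

lemma eval₂_schurR (N : ℕ) : (schurR N).eval₂ (Int.castRingHom R) q = schurSum q N := by
  rw [schurR, schurSum, eval₂_finsetSum]
  refine sum_congr rfl fun j _ => ?_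
  rw [eval₂_mul, eval₂_X_pow, eval₂_comp, eval₂_X_pow, ← Units.val_pow_eq_pow_val q 3,
    eval₂_qtrinom _ le_rfl]
  rfl

end

lemma Polynomial.toLaurent_eq_eval₂ (p : ℤ[X]) :
    toLaurent p = p.eval₂ (Int.castRingHom _) (LaurentPolynomial.T 1) :=
  DFunLike.congr_fun (ringHom_ext (f := toLaurent)
    (g := eval₂RingHom (Int.castRingHom _) (LaurentPolynomial.T 1)) (fun a => by simp)
    (by simp [toLaurent_X])) p

theorem schurR_recurrence (N : ℕ) (hN : 2 ≤ N) :
    schurR N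
      = (1 + Polynomial.X ^ (3 * N - 2) + Polynomial.X ^ (3 * N - 1)) * schurR (N - 1)
        + Polynomial.X ^ (3 * N - 3) * (1 - Polynomial.X ^ (3 * N - 3)) * schurR (N - 2) := by
  obtain ⟨n, rfl⟩ : ∃ n, N = n + 2 := ⟨N - 2, by omega⟩
  rw [show 3 * (n + 2) - 2 = 3 * n + 4 by omega, show 3 * (n + 2) - 1 = 3 * n + 5 by omega,
    show 3 * (n + 2) - 3 = 3 * n + 3 by omega, show n + 2 - 1 = n + 1 by omega,
    Nat.add_sub_cancel]
  apply toLaurent_injective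
  obtain ⟨t, ht⟩ := LaurentPolynomial.isUnit_T (R := ℤ) 1
  simp only [toLaurent_eq_eval₂, ← ht, eval₂_add, eval₂_mul, eval₂_sub, eval₂_one, eval₂_X_pow,
    eval₂_schurR]
  exact schurSum_recurrence t n
end

section
/- For every nonneg integer N and |q|<1, the identity Σ_{k,l ≥ 0, k+l ≤ N} q^{k + l(3l+1)/2} · (q³;q³)_N / ((q³;q³)_{N-k-l} (q³;q³)_k (q³;q³)_l) = Σ_{k=0}^{N} q^k · [N choose k]_{q³} · (-q²; q³)_{N-k} holds as an identity of polynomials in q. -/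
/-!
The trinomial coefficient `(q³;q³)_N / ((q³;q³)_{N-k-l} (q³;q³)_k (q³;q³)_l)` factors as
`[N choose k]_{q³} [N-k choose l]_{q³}`, and `l(3l+1)/2 = 3·C(l,2) + 2l`. Hence for fixed `k` the
inner sum over `l` is the q-binomial expansion `∑ₗ Q^{C(l,2)} xˡ [M choose l]_Q = (-x;Q)_M` with
`Q = q³`, `x = q²`, `M = N - k`.
-/

open Finset

/-- The finite q-Pochhammer symbol `(a; Q)_n = ∏_{i=0}^{n-1} (1 - a Q^i)`. -/
noncomputable def qPoch (a Q : ℂ) (n : ℕ) : ℂ :=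
  ∏ i ∈ range n, (1 - a * Q ^ i)

lemma qPoch_zero (a Q : ℂ) : qPoch a Q 0 = 1 := by simp [qPoch]

lemma qPoch_succ (a Q : ℂ) (n : ℕ) :
    qPoch a Q (n + 1) = qPoch a Q n * (1 - a * Q ^ n) := by
  simp [qPoch, prod_range_succ]

lemma qPoch_ne_zero {a Q : ℂ} (ha : ‖a‖ < 1) (hQ : ‖Q‖ ≤ 1) (n : ℕ) : qPoch a Q n ≠ 0 := by
  refine prod_ne_zero_iff.mpr fun i _ => sub_ne_zero.mpr fun h => ?_
  have : ‖a * Q ^ i‖ < 1 := by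
    rw [norm_mul, norm_pow]
    exact mul_lt_one_of_nonneg_of_lt_one_left (norm_nonneg a) ha (pow_le_one₀ (norm_nonneg Q) hQ)
  simp [← h] at this

/-- The Gaussian binomial coefficient `[M choose l]_Q`, extended by `0` for `l > M` so that the
Pascal rule `qBinomial_succ_succ` holds for every `l`. -/
noncomputable def qBinomial (Q : ℂ) (M l : ℕ) : ℂ :=
  if l ≤ M then qPoch Q Q M / (qPoch Q Q l * qPoch Q Q (M - l)) else 0

lemma qBinomial_of_lt {Q : ℂ} {M l : ℕ} (h : M < l) : qBinomial Q M l = 0 := by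
  simp [qBinomial, Nat.not_le.mpr h]

lemma qBinomial_zero_right {Q : ℂ} {M : ℕ} (hM : qPoch Q Q M ≠ 0) : qBinomial Q M 0 = 1 := by
  simp [qBinomial, qPoch_zero, hM]

lemma qBinomial_succ_succ {Q : ℂ} (hQ : ∀ n, qPoch Q Q n ≠ 0) (M l : ℕ) :
    qBinomial Q (M + 1) (l + 1) = Q ^ (M - l) * qBinomial Q M l + qBinomial Q M (l + 1) := by
  rcases lt_trichotomy l M with hlM | rfl | hMl
  · obtain ⟨r, rfl⟩ : ∃ r, M = l + 1 + r := ⟨M - (l + 1), by omega⟩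
    have hQl : 1 - Q * Q ^ l ≠ 0 := fun h => hQ (l + 1) (by rw [qPoch_succ, h, mul_zero])
    have hQr : 1 - Q * Q ^ r ≠ 0 := fun h => hQ (r + 1) (by rw [qPoch_succ, h, mul_zero])
    simp only [qBinomial, if_pos (by omega : l + 1 ≤ l + 1 + r + 1), if_pos (by omega : l ≤ l + 1 + r),
      if_pos (by omega : l + 1 ≤ l + 1 + r), show l + 1 + r + 1 - (l + 1) = r + 1 by omega,
      show l + 1 + r - l = r + 1 by omega, show l + 1 + r - (l + 1) = r by omega,
      qPoch_succ Q Q (l + 1 + r), qPoch_succ Q Q l, qPoch_succ Q Q r]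
    field_simp [hQ l, hQ r, hQ (l + 1 + r)]
    ring
  · simp [qBinomial, qPoch_zero, hQ l, hQ (l + 1)]
  · simp [qBinomial_of_lt, hMl, Nat.lt_succ_of_lt hMl]

theorem qPoch_neg_eq_sum_qBinomial {Q : ℂ} (hQ : ∀ n, qPoch Q Q n ≠ 0) (x : ℂ) (M : ℕ) :
    qPoch (-x) Q M = ∑ l ∈ range (M + 1), Q ^ l.choose 2 * x ^ l * qBinomial Q M l := by
  induction M with
  | zero => simp [qPoch_zero, qBinomial_zero_right (hQ _)]
  | succ M ih =>
    set t : ℕ → ℂ := fun l => Q ^ l.choose 2 * x ^ l * qBinomial Q M l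
    have pascal : ∀ l ∈ range (M + 1),
        Q ^ (l + 1).choose 2 * x ^ (l + 1) * qBinomial Q (M + 1) (l + 1) =
          x * Q ^ M * t l + t (l + 1) := by
      intro l hl
      have hQM : Q ^ M = Q ^ l * Q ^ (M - l) := by
        rw [← pow_add, Nat.add_sub_cancel' (Nat.lt_succ_iff.mp (mem_range.mp hl))]
      simp only [t, qBinomial_succ_succ hQ, Nat.choose_succ_succ', Nat.choose_one_right, hQM]
      ring
    have shift : ∑ l ∈ range (M + 1), t (l + 1) + t 0 = ∑ l ∈ range (M + 1), t l := by
      rw [← sum_range_succ', sum_range_succ, add_eq_left]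
      simp only [t, qBinomial_of_lt M.lt_succ_self, mul_zero]
    have first : Q ^ (0 : ℕ).choose 2 * x ^ 0 * qBinomial Q (M + 1) 0 = t 0 := by
      simp [t, qBinomial_zero_right (hQ _)]
    rw [sum_range_succ', sum_congr rfl pascal, sum_add_distrib, ← mul_sum, add_assoc, first, shift,
      qPoch_succ, ih]
    ring

lemma mul_three_mul_add_one_div_two (l : ℕ) : l * (3 * l + 1) / 2 = 3 * l.choose 2 + 2 * l := by
  have h : l.choose 2 * 2 = l * (l - 1) :=
    Nat.choose_two_right l ▸ Nat.div_mul_cancel (Nat.even_mul_pred_self l).two_dvd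
  refine Nat.div_eq_of_eq_mul_left two_pos ?_
  cases l with
  | zero => rfl
  | succ m =>
    rw [Nat.add_sub_cancel] at h
    linarith

lemma qPoch_div_prod_eq_qBinomial_mul {Q : ℂ} (hQ : ∀ n, qPoch Q Q n ≠ 0) {N k l : ℕ}
    (h : k + l ≤ N) :
    qPoch Q Q N / (qPoch Q Q (N - k - l) * qPoch Q Q k * qPoch Q Q l) =
      qBinomial Q N k * qBinomial Q (N - k) l := by
  rw [qBinomial, qBinomial, if_pos (by omega), if_pos (by omega)]
  field_simp [hQ (N - k)]

theorem trinomial_T0_to_binomials (N : ℕ) (q : ℂ) (hq : ‖q‖ < 1) :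
    ∑ k ∈ range (N + 1), ∑ l ∈ range (N + 1),
      (if k + l ≤ N then
        q ^ (k + l * (3 * l + 1) / 2) * qPoch (q ^ 3) (q ^ 3) N /
          (qPoch (q ^ 3) (q ^ 3) (N - k - l) * qPoch (q ^ 3) (q ^ 3) k *
            qPoch (q ^ 3) (q ^ 3) l)
      else 0)
      = ∑ k ∈ range (N + 1),
          q ^ k * (qPoch (q ^ 3) (q ^ 3) N /
              (qPoch (q ^ 3) (q ^ 3) k * qPoch (q ^ 3) (q ^ 3) (N - k))) *
            qPoch (-q ^ 2) (q ^ 3) (N - k) := by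
  have hq3 : ‖q ^ 3‖ < 1 := by
    rw [norm_pow]
    exact pow_lt_one₀ (norm_nonneg q) hq three_ne_zero
  have hQ : ∀ n, qPoch (q ^ 3) (q ^ 3) n ≠ 0 := qPoch_ne_zero hq3 hq3.le
  refine sum_congr rfl fun k hk => ?_
  have hkN : k ≤ N := Nat.lt_succ_iff.mp (mem_range.mp hk)
  rw [qPoch_neg_eq_sum_qBinomial hQ, mul_sum,
    sum_subset (range_subset_range.mpr (by omega : N - k + 1 ≤ N + 1))]
  · refine sum_congr rfl fun l _ => ?_
    by_cases hkl : k + l ≤ N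
    · rw [if_pos hkl, mul_div_assoc, qPoch_div_prod_eq_qBinomial_mul hQ hkl, qBinomial, if_pos hkN,
        mul_three_mul_add_one_div_two, pow_add, pow_add, pow_mul, pow_mul]
      ring
    · rw [if_neg hkl, qBinomial_of_lt (by omega), mul_zero, mul_zero]
  · intro l _ hl
    rw [qBinomial_of_lt (by rw [mem_range] at hl; omega), mul_zero, mul_zero]
end
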